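/- arXiv:2601.17141 — 2 statements merged into one kernel-verified Lean document; each statement's English description precedes it below -/
import Mathlib

section
/- Suppose E[Δ | F] = 1/W a.s. with W > 0 F-measurable, and X is an F-measurable random vector in ℝ^d with E[W Δ X X^T] = E[X X^T] invertible. If Y = β^T X + ε with E[ε X W Δ] = 0, then β is the unique minimizer over b ∈ ℝ^d of E[W Δ (Y − b^T X)^2]. -/
/-!
With `v = β - b`, the residual `Y - bᵀX` is `(Y - βᵀX) + vᵀX`, so the weighted risk at `b`
is the risk at `β`, plus twice `vᵀ E[WΔ X (Y - βᵀX)]`, which the orthogonality condition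
(the normal equations) kills, plus the Gram form `vᵀ E[WΔ X Xᵀ] v`, which is positive for
`v ≠ 0`. All the integrability needed comes from that of the risk itself, by polarization.
-/

open MeasureTheory Matrix

section

variable {Ω ι : Type*} [Fintype ι] {m : MeasurableSpace Ω} {μ : Measure Ω}

theorem integral_dotProduct {f : Ω → ι → ℝ} (hf : ∀ k, Integrable (fun ω => f ω k) μ)
    (v : ι → ℝ) : ∫ ω, v ⬝ᵥ f ω ∂μ = v ⬝ᵥ fun k => ∫ ω, f ω k ∂μ := by
  simp only [dotProduct]
  rw [integral_finsetSum _ fun k _ => (hf k).const_mul (v k)]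
  simp only [integral_const_mul]

theorem integral_dotProduct_mulVec {M : Ω → Matrix ι ι ℝ}
    (hM : ∀ k l, Integrable (fun ω => M ω k l) μ) (v : ι → ℝ) :
    ∫ ω, v ⬝ᵥ (M ω *ᵥ v) ∂μ = v ⬝ᵥ (of (fun k l => ∫ ω, M ω k l ∂μ) *ᵥ v) := by
  have hrow : ∀ k, Integrable (fun ω => (M ω *ᵥ v) k) μ := fun k =>
    integrable_finsetSum _ fun l _ => (hM k l).mul_const (v l)
  rw [integral_dotProduct hrow]
  congr 1
  funext k
  simp only [mulVec, dotProduct, of_apply]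
  rw [integral_finsetSum _ fun l _ => (hM k l).mul_const (v l)]
  simp only [integral_mul_const]

variable (μ) in
noncomputable def weightedGram (w : Ω → ℝ) (X : Ω → ι → ℝ) : Matrix ι ι ℝ :=
  of fun k l => ∫ ω, w ω * X ω k * X ω l ∂μ

variable {w Y : Ω → ℝ} {X : Ω → ι → ℝ}

theorem integrable_mul_dotProduct_sq
    (hint : ∀ b, Integrable (fun ω => w ω * (Y ω - b ⬝ᵥ X ω) ^ 2) μ) (u : ι → ℝ) :
    Integrable (fun ω => w ω * (u ⬝ᵥ X ω) ^ 2) μ := by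
  have hpar : (fun ω => w ω * (u ⬝ᵥ X ω) ^ 2) = fun ω =>
      (w ω * (Y ω - (-u) ⬝ᵥ X ω) ^ 2 + w ω * (Y ω - u ⬝ᵥ X ω) ^ 2) / 2
        - w ω * (Y ω - 0 ⬝ᵥ X ω) ^ 2 := by
    funext ω
    rw [neg_dotProduct, zero_dotProduct]
    ring
  rw [hpar]
  exact (((hint (-u)).add (hint u)).div_const 2).sub (hint 0)

theorem integrable_mul_dotProduct_mul_residual
    (hint : ∀ b, Integrable (fun ω => w ω * (Y ω - b ⬝ᵥ X ω) ^ 2) μ) (u c : ι → ℝ) :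
    Integrable (fun ω => w ω * (u ⬝ᵥ X ω) * (Y ω - c ⬝ᵥ X ω)) μ := by
  have hpar : (fun ω => w ω * (u ⬝ᵥ X ω) * (Y ω - c ⬝ᵥ X ω)) = fun ω =>
      (w ω * (Y ω - (c - u) ⬝ᵥ X ω) ^ 2 - w ω * (Y ω - c ⬝ᵥ X ω) ^ 2
        - w ω * (u ⬝ᵥ X ω) ^ 2) / 2 := by
    funext ω
    rw [sub_dotProduct]
    ring
  rw [hpar]
  exact (((hint (c - u)).sub (hint c)).sub (integrable_mul_dotProduct_sq hint u)).div_const 2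

theorem integrable_mul_apply_mul_apply
    (hquad : ∀ u, Integrable (fun ω => w ω * (u ⬝ᵥ X ω) ^ 2) μ) (k l : ι) :
    Integrable (fun ω => w ω * X ω k * X ω l) μ := by
  classical
  have hpar : (fun ω => w ω * X ω k * X ω l) = fun ω =>
      (w ω * ((Pi.single k 1 + Pi.single l 1) ⬝ᵥ X ω) ^ 2
        - w ω * ((Pi.single k 1 - Pi.single l 1) ⬝ᵥ X ω) ^ 2) / 4 := by
    funext ω
    rw [add_dotProduct, sub_dotProduct, single_one_dotProduct, single_one_dotProduct]
    ring
  rw [hpar]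
  exact ((hquad _).sub (hquad _)).div_const 4

theorem mul_dotProduct_sq_eq_dotProduct_mulVec (a : ℝ) (x v : ι → ℝ) :
    a * (v ⬝ᵥ x) ^ 2 = v ⬝ᵥ (of (fun k l => a * x k * x l) *ᵥ v) := by
  simp only [dotProduct, mulVec, of_apply, sq, Finset.sum_mul, Finset.mul_sum]
  exact Finset.sum_congr rfl fun k _ => Finset.sum_congr rfl fun l _ => by ring

theorem integral_mul_sq_sub_dotProduct_eq {β : ι → ℝ}
    (hint : ∀ b, Integrable (fun ω => w ω * (Y ω - b ⬝ᵥ X ω) ^ 2) μ)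
    (hnormal : ∀ k, ∫ ω, w ω * X ω k * (Y ω - β ⬝ᵥ X ω) ∂μ = 0) (b : ι → ℝ) :
    ∫ ω, w ω * (Y ω - b ⬝ᵥ X ω) ^ 2 ∂μ
      = ∫ ω, w ω * (Y ω - β ⬝ᵥ X ω) ^ 2 ∂μ
        + (β - b) ⬝ᵥ (weightedGram μ w X *ᵥ (β - b)) := by
  classical
  set v := β - b
  have hquad := integrable_mul_dotProduct_sq hint
  have hcross_int := integrable_mul_dotProduct_mul_residual hint v β
  have hexpand : (fun ω => w ω * (Y ω - b ⬝ᵥ X ω) ^ 2) = fun ω =>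
      w ω * (Y ω - β ⬝ᵥ X ω) ^ 2 + 2 * (w ω * (v ⬝ᵥ X ω) * (Y ω - β ⬝ᵥ X ω))
        + w ω * (v ⬝ᵥ X ω) ^ 2 := by
    funext ω
    rw [show b = β - v by simp [v], sub_dotProduct]
    ring
  have hcross : ∫ ω, w ω * (v ⬝ᵥ X ω) * (Y ω - β ⬝ᵥ X ω) ∂μ = 0 := by
    have hcoord : ∀ k, Integrable (fun ω => w ω * X ω k * (Y ω - β ⬝ᵥ X ω)) μ := fun k => by
      simpa only [single_one_dotProduct] using
        integrable_mul_dotProduct_mul_residual hint (Pi.single k 1) β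
    calc ∫ ω, w ω * (v ⬝ᵥ X ω) * (Y ω - β ⬝ᵥ X ω) ∂μ
        = ∫ ω, v ⬝ᵥ (fun k => w ω * X ω k * (Y ω - β ⬝ᵥ X ω)) ∂μ := by
          congr 1; funext ω
          simp only [dotProduct, Finset.mul_sum, Finset.sum_mul]
          exact Finset.sum_congr rfl fun k _ => by ring
      _ = 0 := by rw [integral_dotProduct hcoord, funext hnormal]; exact dotProduct_zero v
  have hgram : ∫ ω, w ω * (v ⬝ᵥ X ω) ^ 2 ∂μ = v ⬝ᵥ (weightedGram μ w X *ᵥ v) := by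
    simp only [mul_dotProduct_sq_eq_dotProduct_mulVec]
    exact integral_dotProduct_mulVec (integrable_mul_apply_mul_apply hquad) v
  have hfirst : Integrable (fun ω => w ω * (Y ω - β ⬝ᵥ X ω) ^ 2
      + 2 * (w ω * (v ⬝ᵥ X ω) * (Y ω - β ⬝ᵥ X ω))) μ := (hint β).add (hcross_int.const_mul 2)
  rw [hexpand, integral_add hfirst (hquad v),
    integral_add (hint β) (hcross_int.const_mul 2), integral_const_mul, hcross, hgram,
    mul_zero, add_zero]

end

theorem weighted_least_squares_identification_general
    {Ω : Type*} {𝒜 : MeasurableSpace Ω} {P : Measure Ω}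
    {d : ℕ}
    (X : Ω → Fin d → ℝ) (W Δ ε : Ω → ℝ) (β : Fin d → ℝ)
    (Y : Ω → ℝ)
    (hY : ∀ ω, Y ω = (β ⬝ᵥ X ω) + ε ω)
    (hGram : Matrix.PosDef (Matrix.of fun k l => ∫ ω, W ω * Δ ω * X ω k * X ω l ∂P))
    (hOrth : ∀ k, ∫ ω, W ω * Δ ω * X ω k * ε ω ∂P = 0)
    (hint : ∀ b : Fin d → ℝ, Integrable (fun ω => W ω * Δ ω * (Y ω - b ⬝ᵥ X ω) ^ 2) P) :
    ∀ b : Fin d → ℝ, b ≠ β →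
      (∫ ω, W ω * Δ ω * (Y ω - β ⬝ᵥ X ω) ^ 2 ∂P)
        < ∫ ω, W ω * Δ ω * (Y ω - b ⬝ᵥ X ω) ^ 2 ∂P := by
  intro b hb
  have hresidual : ∀ ω, Y ω - β ⬝ᵥ X ω = ε ω := fun ω => by rw [hY ω, add_sub_cancel_left]
  have hnormal : ∀ k, ∫ ω, W ω * Δ ω * X ω k * (Y ω - β ⬝ᵥ X ω) ∂P = 0 := by
    simpa only [hresidual] using hOrth
  rw [integral_mul_sq_sub_dotProduct_eq (w := fun ω => W ω * Δ ω) hint hnormal b]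
  have hpos := hGram.dotProduct_mulVec_pos (sub_ne_zero.mpr hb.symm)
  rw [star_trivial] at hpos
  exact lt_add_of_pos_right _ hpos

/-- Identification of regression coefficients via weighted least squares:
under `E[Δ|F] = 1/W`, positive definiteness of `E[W Δ X Xᵀ]`, and the
orthogonality `E[W Δ X ε] = 0`, the true coefficient `β` is the unique
minimizer of `b ↦ E[W Δ (Y − bᵀX)²]`. -/
theorem weighted_least_squares_identification
    {Ω : Type*} {𝒜 : MeasurableSpace Ω} {P : Measure Ω} [IsProbabilityMeasure P]
    {F : MeasurableSpace Ω} (hF : F ≤ 𝒜) {d : ℕ}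
    (X : Ω → Fin d → ℝ) (W Δ ε : Ω → ℝ) (β : Fin d → ℝ)
    (hXmeas : StronglyMeasurable[F] X)
    (hWmeas : StronglyMeasurable[F] W)
    (hWpos : ∀ ω, 0 < W ω) (hΔnonneg : ∀ ω, 0 ≤ Δ ω)
    (hcond : P[Δ | F] =ᵐ[P] fun ω => (W ω)⁻¹)
    (Y : Ω → ℝ)
    (hY : ∀ ω, Y ω = (β ⬝ᵥ X ω) + ε ω)
    (hGram : Matrix.PosDef (Matrix.of fun k l => ∫ ω, W ω * Δ ω * X ω k * X ω l ∂P))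
    (hOrth : ∀ k, ∫ ω, W ω * Δ ω * X ω k * ε ω ∂P = 0)
    (hint : ∀ b : Fin d → ℝ, Integrable (fun ω => W ω * Δ ω * (Y ω - b ⬝ᵥ X ω) ^ 2) P) :
    ∀ b : Fin d → ℝ, b ≠ β →
      (∫ ω, W ω * Δ ω * (Y ω - β ⬝ᵥ X ω) ^ 2 ∂P)
        < ∫ ω, W ω * Δ ω * (Y ω - b ⬝ᵥ X ω) ^ 2 ∂P :=
  weighted_least_squares_identification_general (𝒜 := 𝒜) X W Δ ε β Y hY hGram hOrth hint
end

section
/- Let A and B be real random vectors (with A ⊗ B the Kronecker product). If the eigenvalues of E[A A^T] are bounded below by c_A > 0 and the eigenvalues of E[B B^T | A] are bounded below by c_B > 0 almost surely, then the smallest eigenvalue of E[(A ⊗ B)(A ⊗ B)^T] is at least c_A c_B. -/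
open MeasureTheory Matrix BigOperators

/-- Integrability of a product from integrability of squares. -/
lemma integrable_mul_of_sq {Ω : Type*} {𝒜 : MeasurableSpace Ω} {P : Measure Ω}
    {f g : Ω → ℝ} (hfm : Measurable f) (hgm : Measurable g)
    (hf : Integrable (fun ω => f ω ^ 2) P) (hg : Integrable (fun ω => g ω ^ 2) P) :
    Integrable (fun ω => f ω * g ω) P := by
  refine Integrable.mono' ((hf.add hg).const_mul (1/2 : ℝ)) ((hfm.mul hgm).aestronglyMeasurable)
    (Filter.Eventually.of_forall fun ω => ?_)
  have h := sq_nonneg (|f ω| - |g ω|)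
  simp only [Real.norm_eq_abs, Pi.add_apply]
  rw [abs_mul]
  nlinarith [abs_nonneg (f ω), abs_nonneg (g ω), sq_abs (f ω), sq_abs (g ω)]

/-- Eigenvalue lower bound for Kronecker-structured Gram matrices: if the
eigenvalues of `E[A Aᵀ]` are bounded below by `c_A > 0` and those of the
conditional expectation `E[B Bᵀ | A]` are bounded below by `c_B > 0` a.s.,
then the smallest eigenvalue of `E[(A ⊗ B)(A ⊗ B)ᵀ]` is at least `c_A c_B`,
expressed through the quadratic form. -/
theorem kronecker_gram_eigenvalue_lower_bound
    {Ω : Type*} {𝒜 : MeasurableSpace Ω} {P : Measure Ω} [IsProbabilityMeasure P]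
    {d q : ℕ} (A : Ω → Fin d → ℝ) (B : Ω → Fin q → ℝ)
    (hAmeas : ∀ k, Measurable fun ω => A ω k)
    (hBmeas : ∀ k, Measurable fun ω => B ω k)
    (hA2 : ∀ k, Integrable (fun ω => (A ω k) ^ 2) P)
    (hB2 : ∀ k, Integrable (fun ω => (B ω k) ^ 2) P)
    (hABint : ∀ p p' : Fin d × Fin q,
      Integrable (fun ω => A ω p.1 * B ω p.2 * (A ω p'.1 * B ω p'.2)) P)
    (cA cB : ℝ) (hcA : 0 < cA) (hcB : 0 < cB)
    (hAeig : ∀ v : Fin d → ℝ,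
      cA * ∑ k, v k ^ 2 ≤ ∑ k, ∑ l, v k * (∫ ω, A ω k * A ω l ∂P) * v l)
    (hBeig : ∀ v : Fin q → ℝ,
      ∀ᵐ ω ∂P, cB * ∑ k, v k ^ 2
        ≤ ∑ k, ∑ l, v k * ((P[fun ω' => B ω' k * B ω' l | MeasurableSpace.comap A (by infer_instance)]) ω) * v l) :
    ∀ u : Fin d × Fin q → ℝ,
      cA * cB * ∑ p, u p ^ 2
        ≤ ∑ p, ∑ p', u p * (∫ ω, A ω p.1 * B ω p.2 * (A ω p'.1 * B ω p'.2) ∂P) * u p' := by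
  intro u
  classical
  have hAm : Measurable[𝒜] A := measurable_pi_lambda A hAmeas
  set m : MeasurableSpace Ω := MeasurableSpace.comap A (by infer_instance) with hm_def
  have hm : m ≤ 𝒜 := by rw [hm_def]; exact Measurable.comap_le hAm
  haveI : IsFiniteMeasure (P.trim hm) := by
    refine ⟨?_⟩
    rw [trim_measurableSet_eq hm (@MeasurableSet.univ _ m)]
    exact measure_lt_top P _
  -- coordinate functions of A are m-measurable
  have hAmm : ∀ j, Measurable[m] fun ω => A ω j := fun j => by
    rw [hm_def]
    exact (measurable_pi_apply j).comp (Measurable.of_comap_le le_rfl)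
  -- w k = contraction of A against the k-th slice of u
  set w : Fin q → Ω → ℝ := fun k ω => ∑ j, u (j, k) * A ω j with hw_def
  have hwmm : ∀ k, Measurable[m] (w k) := fun k =>
    Finset.measurable_sum _ fun j _ => ((hAmm j).const_mul _)
  have hwm : ∀ k, Measurable[𝒜] (w k) := fun k => (hwmm k).mono hm le_rfl
  set M : Fin q → Fin q → Ω → ℝ :=
    fun k l => P[fun ω' => B ω' k * B ω' l | m] with hM_def
  -- integrability facts
  have hBB : ∀ k l, Integrable (fun ω => B ω k * B ω l) P := fun k l =>
    integrable_mul_of_sq (hBmeas k) (hBmeas l) (hB2 k) (hB2 l)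
  have hAA : ∀ j j', Integrable (fun ω => A ω j * A ω j') P := fun j j' =>
    integrable_mul_of_sq (hAmeas j) (hAmeas j') (hA2 j) (hA2 j')
  have hexpand : ∀ k l, (fun ω => (w k ω * B ω k) * (w l ω * B ω l))
      = fun ω => ∑ j, ∑ j', u (j, k) * u (j', l) *
          (A ω j * B ω k * (A ω j' * B ω l)) := by
    intro k l; funext ω
    simp only [hw_def, Finset.sum_mul, Finset.mul_sum]
    rw [Finset.sum_comm]
    refine Finset.sum_congr rfl fun j _ => Finset.sum_congr rfl fun j' _ => by ring
  have hwwBB : ∀ k l, Integrable (fun ω => (w k ω * B ω k) * (w l ω * B ω l)) P := by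
    intro k l
    rw [hexpand k l]
    exact integrable_finset_sum _ fun j _ => integrable_finset_sum _ fun j' _ =>
      ((hABint (j, k) (j', l)).const_mul _)
  -- pull-out property of conditional expectation
  have hpull : ∀ k l, (P[fun ω => (w k ω * w l ω) * (B ω k * B ω l) | m])
      =ᵐ[P] fun ω => (w k ω * w l ω) * M k l ω := by
    intro k l
    have hfsm : StronglyMeasurable[m] fun ω => w k ω * w l ω :=
      ((hwmm k).mul (hwmm l)).stronglyMeasurable
    have hint : Integrable (fun ω => (w k ω * w l ω) * (B ω k * B ω l)) P :=
      (hwwBB k l).congr (Filter.Eventually.of_forall fun ω => by ring)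
    exact condExp_mul_of_stronglyMeasurable_left hfsm hint (hBB k l)
  have hwwM_int : ∀ k l, Integrable (fun ω => (w k ω * w l ω) * M k l ω) P := fun k l =>
    (integrable_condExp).congr (hpull k l)
  have hint_eq : ∀ k l, ∫ ω, (w k ω * B ω k) * (w l ω * B ω l) ∂P
      = ∫ ω, (w k ω * w l ω) * M k l ω ∂P := by
    intro k l
    calc ∫ ω, (w k ω * B ω k) * (w l ω * B ω l) ∂P
        = ∫ ω, (w k ω * w l ω) * (B ω k * B ω l) ∂P :=
          integral_congr_ae (Filter.Eventually.of_forall fun ω => by ring)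
      _ = ∫ ω, (P[fun ω => (w k ω * w l ω) * (B ω k * B ω l) | m]) ω ∂P :=
          (integral_condExp hm).symm
      _ = ∫ ω, (w k ω * w l ω) * M k l ω ∂P := integral_congr_ae (hpull k l)
  -- a.e. lower bound uniform over all real vectors, via rational vectors
  have hae : ∀ᵐ ω ∂P, ∀ v : Fin q → ℝ,
      cB * ∑ k, v k ^ 2 ≤ ∑ k, ∑ l, v k * M k l ω * v l := by
    have h1 : ∀ᵐ ω ∂P, ∀ r : Fin q → ℚ,
        cB * ∑ k, ((r k : ℝ)) ^ 2 ≤ ∑ k, ∑ l, (r k : ℝ) * M k l ω * (r l : ℝ) :=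
      (ae_all_iff).mpr fun r => hBeig fun k => (r k : ℝ)
    filter_upwards [h1] with ω hω v
    have hcont : Continuous fun v : Fin q → ℝ =>
        (∑ k, ∑ l, v k * M k l ω * v l) - cB * ∑ k, v k ^ 2 := by
      refine Continuous.sub ?_ (continuous_const.mul ?_)
      · exact continuous_finset_sum _ fun k _ => continuous_finset_sum _ fun l _ =>
          (((continuous_apply k).mul continuous_const).mul (continuous_apply l))
      · exact continuous_finset_sum _ fun k _ => (continuous_apply k).pow 2
    have hclosed : IsClosed {v : Fin q → ℝ |
        cB * ∑ k, v k ^ 2 ≤ ∑ k, ∑ l, v k * M k l ω * v l} := by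
      have := isClosed_le (continuous_const : Continuous fun _ : Fin q → ℝ => (0:ℝ)) hcont
      convert this using 1
      ext v; simp [sub_nonneg]
    have hdense : Dense (Set.pi Set.univ fun _ : Fin q => Set.range ((↑) : ℚ → ℝ)) :=
      dense_pi Set.univ fun _ _ => Rat.denseRange_cast
    have hsub : (Set.pi Set.univ fun _ : Fin q => Set.range ((↑) : ℚ → ℝ)) ⊆
        {v : Fin q → ℝ | cB * ∑ k, v k ^ 2 ≤ ∑ k, ∑ l, v k * M k l ω * v l} := by
      intro v hv
      choose r hr using fun k => hv k (Set.mem_univ k)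
      have hv' : v = fun k => (r k : ℝ) := by funext k; exact (hr k).symm
      rw [hv']; exact hω r
    have hall : (Set.univ : Set (Fin q → ℝ)) ⊆ _ :=
      hdense.closure_eq ▸ closure_minimal hsub hclosed
    exact hall (Set.mem_univ v)
  -- integrability of the quadratic forms
  have hQint : Integrable (fun ω => ∑ k, ∑ l, w k ω * M k l ω * w l ω) P := by
    refine integrable_finset_sum _ fun k _ => integrable_finset_sum _ fun l _ => ?_
    exact (hwwM_int k l).congr (Filter.Eventually.of_forall fun ω => by ring)
  have hsq : ∀ k, (fun ω => w k ω ^ 2)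
      = fun ω => ∑ j, ∑ j', u (j, k) * u (j', k) * (A ω j * A ω j') := by
    intro k; funext ω
    simp only [hw_def, sq, Finset.sum_mul, Finset.mul_sum]
    rw [Finset.sum_comm]
    refine Finset.sum_congr rfl fun j _ => Finset.sum_congr rfl fun j' _ => by ring
  have hw2int : ∀ k, Integrable (fun ω => w k ω ^ 2) P := by
    intro k
    rw [hsq k]
    exact integrable_finset_sum _ fun j _ => integrable_finset_sum _ fun j' _ =>
      ((hAA j j').const_mul _)
  have hw2val : ∀ k, ∫ ω, w k ω ^ 2 ∂P
      = ∑ j, ∑ j', u (j, k) * (∫ ω, A ω j * A ω j' ∂P) * u (j', k) := by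
    intro k
    rw [hsq k, integral_finset_sum _ (fun j _ => integrable_finset_sum _ fun j' _ =>
      ((hAA j j').const_mul _))]
    refine Finset.sum_congr rfl fun j _ => ?_
    rw [integral_finset_sum _ (fun j' _ => ((hAA j j').const_mul _))]
    refine Finset.sum_congr rfl fun j' _ => ?_
    rw [integral_const_mul]; ring
  -- rewrite each entry of the Gram matrix quadratic form as one integral
  have hterm : ∀ p p' : Fin d × Fin q,
      u p * (∫ ω, A ω p.1 * B ω p.2 * (A ω p'.1 * B ω p'.2) ∂P) * u p'
      = ∫ ω, (u p * (A ω p.1 * B ω p.2)) * (u p' * (A ω p'.1 * B ω p'.2)) ∂P := by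
    intro p p'
    rw [mul_right_comm, ← integral_const_mul]
    exact integral_congr_ae (Filter.Eventually.of_forall fun ω => by ring)
  have htint : ∀ p p' : Fin d × Fin q, Integrable
      (fun ω => (u p * (A ω p.1 * B ω p.2)) * (u p' * (A ω p'.1 * B ω p'.2))) P := fun p p' =>
    ((hABint p p').const_mul (u p * u p')).congr
      (Filter.Eventually.of_forall fun ω => by ring)
  have hsum1 : ∫ ω, ∑ p, ∑ p',
        (u p * (A ω p.1 * B ω p.2)) * (u p' * (A ω p'.1 * B ω p'.2)) ∂P
      = ∑ p, ∑ p', ∫ ω,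
        (u p * (A ω p.1 * B ω p.2)) * (u p' * (A ω p'.1 * B ω p'.2)) ∂P := by
    rw [integral_finset_sum _ fun p _ => integrable_finset_sum _ fun p' _ => htint p p']
    exact Finset.sum_congr rfl fun p _ => integral_finset_sum _ fun p' _ => htint p p'
  -- pointwise regrouping of the Kronecker sum
  have hpt : ∀ ω, ∑ p, ∑ p', (u p * (A ω p.1 * B ω p.2)) * (u p' * (A ω p'.1 * B ω p'.2))
      = ∑ k, ∑ l, (w k ω * B ω k) * (w l ω * B ω l) := by
    intro ω
    have h2 : ∑ p : Fin d × Fin q, u p * (A ω p.1 * B ω p.2) = ∑ k, w k ω * B ω k := by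
      rw [Fintype.sum_prod_type, Finset.sum_comm]
      refine Finset.sum_congr rfl fun k _ => ?_
      simp only [hw_def, Finset.sum_mul]
      exact Finset.sum_congr rfl fun j _ => by ring
    calc ∑ p, ∑ p', (u p * (A ω p.1 * B ω p.2)) * (u p' * (A ω p'.1 * B ω p'.2))
        = (∑ p : Fin d × Fin q, u p * (A ω p.1 * B ω p.2))
          * (∑ p' : Fin d × Fin q, u p' * (A ω p'.1 * B ω p'.2)) :=
          (Fintype.sum_mul_sum _ _).symm
      _ = (∑ k, w k ω * B ω k) * (∑ l, w l ω * B ω l) := by rw [h2]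
      _ = ∑ k, ∑ l, (w k ω * B ω k) * (w l ω * B ω l) := Fintype.sum_mul_sum _ _
  have hI2 : ∫ ω, ∑ k, ∑ l, (w k ω * B ω k) * (w l ω * B ω l) ∂P
      = ∑ k, ∑ l, ∫ ω, (w k ω * w l ω) * M k l ω ∂P := by
    rw [integral_finset_sum _ fun k _ => integrable_finset_sum _ fun l _ => hwwBB k l]
    refine Finset.sum_congr rfl fun k _ => ?_
    rw [integral_finset_sum _ fun l _ => hwwBB k l]
    exact Finset.sum_congr rfl fun l _ => hint_eq k l
  have hI3 : ∑ k, ∑ l, ∫ ω, (w k ω * w l ω) * M k l ω ∂P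
      = ∫ ω, ∑ k, ∑ l, w k ω * M k l ω * w l ω ∂P := by
    rw [integral_finset_sum _ (fun k _ => integrable_finset_sum _ fun l _ =>
      (hwwM_int k l).congr (Filter.Eventually.of_forall fun ω => by ring))]
    refine Finset.sum_congr rfl fun k _ => ?_
    rw [integral_finset_sum _ (fun l _ =>
      (hwwM_int k l).congr (Filter.Eventually.of_forall fun ω => by ring))]
    exact Finset.sum_congr rfl fun l _ =>
      integral_congr_ae (Filter.Eventually.of_forall fun ω => by ring)
  have hmono : ∫ ω, cB * ∑ k, w k ω ^ 2 ∂P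
      ≤ ∫ ω, ∑ k, ∑ l, w k ω * M k l ω * w l ω ∂P := by
    refine integral_mono_ae
      ((integrable_finset_sum _ fun k _ => hw2int k).const_mul cB) hQint ?_
    filter_upwards [hae] with ω hω
    exact hω fun k => w k ω
  have hLval : ∫ ω, cB * ∑ k, w k ω ^ 2 ∂P
      = cB * ∑ k, ∑ j, ∑ j', u (j, k) * (∫ ω, A ω j * A ω j' ∂P) * u (j', k) := by
    rw [integral_const_mul, integral_finset_sum _ fun k _ => hw2int k]
    congr 1
    exact Finset.sum_congr rfl fun k _ => hw2val k
  have hfin : cA * cB * ∑ p, u p ^ 2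
      ≤ cB * ∑ k, ∑ j, ∑ j', u (j, k) * (∫ ω, A ω j * A ω j' ∂P) * u (j', k) := by
    have h4 : ∑ p : Fin d × Fin q, u p ^ 2 = ∑ k, ∑ j, u (j, k) ^ 2 := by
      rw [Fintype.sum_prod_type]; exact Finset.sum_comm
    rw [h4, Finset.mul_sum, Finset.mul_sum]
    refine Finset.sum_le_sum fun k _ => ?_
    have h5 := hAeig fun j => u (j, k)
    exact le_trans (le_of_eq (by ring)) (mul_le_mul_of_nonneg_left h5 hcB.le)
  calc cA * cB * ∑ p, u p ^ 2
      ≤ cB * ∑ k, ∑ j, ∑ j', u (j, k) * (∫ ω, A ω j * A ω j' ∂P) * u (j', k) := hfin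
    _ = ∫ ω, cB * ∑ k, w k ω ^ 2 ∂P := hLval.symm
    _ ≤ ∫ ω, ∑ k, ∑ l, w k ω * M k l ω * w l ω ∂P := hmono
    _ = ∑ k, ∑ l, ∫ ω, (w k ω * w l ω) * M k l ω ∂P := hI3.symm
    _ = ∫ ω, ∑ k, ∑ l, (w k ω * B ω k) * (w l ω * B ω l) ∂P := hI2.symm
    _ = ∫ ω, ∑ p, ∑ p', (u p * (A ω p.1 * B ω p.2)) * (u p' * (A ω p'.1 * B ω p'.2)) ∂P :=
        integral_congr_ae (Filter.Eventually.of_forall fun ω => (hpt ω).symm)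
    _ = ∑ p, ∑ p', ∫ ω, (u p * (A ω p.1 * B ω p.2)) * (u p' * (A ω p'.1 * B ω p'.2)) ∂P :=
        hsum1
    _ = ∑ p, ∑ p', u p * (∫ ω, A ω p.1 * B ω p.2 * (A ω p'.1 * B ω p'.2) ∂P) * u p' :=
        Finset.sum_congr rfl fun p _ => Finset.sum_congr rfl fun p' _ => (hterm p p').symm
end
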